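/- Let R = k'[[x₁,…,x_n]] with maximal ideal M, let G = ⊕ I_k W^k ⊆ R[W] be a graded subalgebra generated by elements g_{n_i} W^{n_i} (i=1,…,m, each n_i ≥ 1), and let G' be the graded subalgebra generated by all Δ^α(g_{n_i}) W^{n_i−|α|} for 0 ≤ |α| < n_i. Then the Sing condition (ord(I_k) ≥ k for all k) holds for G if and only if it holds for G'. -/

import Mathlib

/-!
The Sing condition for a generator `g W^w` of `G` says `ord g ≥ w`, and `Δ^α` lowers the order
by at most `|α|`, so every generator `Δ^α g W^(w - |α|)` of `G'` lies in the Rees algebra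
`⊕ Mᵏ Wᵏ`; hence so does `G'`. Conversely `G ⊆ G'` because `Δ^0 = id`.
That `Mᵏ` consists of the series of order `≥ k` follows by writing a series without constant
term as `∑ᵢ Xᵢ qᵢ`, where `Xᵢ qᵢ` collects the monomials whose least variable is `Xᵢ`.
-/

/-- The Taylor-expansion operator `Δ^α` on `R = k'[[x₁,…,x_n]]`:
`Δ^α f` is the coefficient of `T^α` in `Tay f`, where `Tay : R → R[[T₁,…,T_n]]`
is the continuous `k'`-algebra homomorphism sending `x_i ↦ x_i + T_i`.
Explicitly, the coefficient of `x^β` in `Δ^α f` is `(α+β choose α)`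
times the coefficient of `x^{α+β}` in `f`. -/
noncomputable def Delta {k' : Type*} [CommRing k'] {n : ℕ} (a : Fin n →₀ ℕ)
    (f : MvPowerSeries (Fin n) k') : MvPowerSeries (Fin n) k' :=
  fun b => (∏ i, ((a + b) i).choose (a i)) • MvPowerSeries.coeff (a + b) f

namespace MvPowerSeries

variable {σ R : Type*} [CommSemiring R]

section LeastVariable

variable [LinearOrder σ]

open Classical in
noncomputable def divXLeast (i : σ) (f : MvPowerSeries σ R) : MvPowerSeries σ R :=
  fun e => if ∀ j < i, e j = 0 then coeff (e + Finsupp.single i 1) f else 0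

open Classical in
theorem coeff_divXLeast (i : σ) (f : MvPowerSeries σ R) (e : σ →₀ ℕ) :
    coeff e (divXLeast i f) = if ∀ j < i, e j = 0 then coeff (e + Finsupp.single i 1) f else 0 :=
  rfl

open Classical in
theorem coeff_X_mul_divXLeast (i : σ) (f : MvPowerSeries σ R) (d : σ →₀ ℕ) :
    coeff d (X i * divXLeast i f) =
      if i ∈ d.support ∧ ∀ j < i, d j = 0 then coeff d f else 0 := by
  have hle : Finsupp.single i 1 ≤ d ↔ i ∈ d.support := by
    simp [Finsupp.single_le_iff, Nat.one_le_iff_ne_zero]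
  rw [X_def, coeff_monomial_mul, one_mul, coeff_divXLeast]
  by_cases hi : i ∈ d.support
  · have hsub : ∀ j < i, (d - Finsupp.single i 1 : σ →₀ ℕ) j = d j := fun j hj => by
      simp [hj.ne']
    simp only [hle.2 hi, if_true, hi, true_and, tsub_add_cancel_of_le (hle.2 hi)]
    exact if_congr (forall₂_congr fun j hj => by rw [hsub j hj]) rfl rfl
  · simp [hle, hi]

theorem sum_X_mul_divXLeast [Fintype σ] {f : MvPowerSeries σ R} (hf : constantCoeff f = 0) :
    ∑ i, X i * divXLeast i f = f := by
  classical
  ext d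
  simp only [map_sum, coeff_X_mul_divXLeast]
  rcases eq_or_ne d 0 with rfl | hd
  · simp [hf]
  set i₀ := d.support.min' (Finsupp.support_nonempty_iff.2 hd)
  have hleast : ∀ i, (i ∈ d.support ∧ ∀ j < i, d j = 0) ↔ i = i₀ := by
    intro i
    constructor
    · rintro ⟨hi, hlt⟩
      refine le_antisymm (not_lt.1 fun h => ?_) (d.support.min'_le i hi)
      exact Finsupp.mem_support_iff.1 (d.support.min'_mem _) (hlt i₀ h)
    · rintro rfl
      exact ⟨d.support.min'_mem _, fun j hj => Finsupp.notMem_support_iff.1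
        fun hj' => not_lt.2 (d.support.min'_le j hj') hj⟩
  simp only [hleast, Finset.sum_ite_eq', Finset.mem_univ, if_true]

theorem le_order_divXLeast {f : MvPowerSeries σ R} {k : ℕ} (hf : ↑(k + 1) ≤ f.order)
    (i : σ) :
    ↑k ≤ (divXLeast i f).order := by
  classical
  refine nat_le_order fun e he => ?_
  rw [coeff_divXLeast]
  split_ifs
  · exact coeff_of_lt_order (lt_of_lt_of_le (by simpa using he) hf)
  · rfl

end LeastVariable

theorem le_order_of_mem_span_range_X_pow {f : MvPowerSeries σ R} {k : ℕ}
    (hf : f ∈ Ideal.span (Set.range X) ^ k) : ↑k ≤ f.order := by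
  induction k generalizing f with
  | zero => simp
  | succ k ih =>
    have hspan : Ideal.span (Set.range X) ≤ RingHom.ker (constantCoeff (σ := σ) (R := R)) :=
      Ideal.span_le.2 (Set.range_subset_iff.2 fun i => by simp)
    rw [pow_succ] at hf
    refine Submodule.mul_induction_on hf (fun f hf g hg => ?_) fun f g hf hg => ?_
    · have hg1 : 1 ≤ g.order := one_le_order_iff_constCoeff_eq_zero.2 (hspan hg)
      calc (↑(k + 1) : ℕ∞) = ↑k + 1 := by push_cast; rfl
        _ ≤ f.order + g.order := add_le_add (ih hf) hg1
        _ ≤ (f * g).order := le_order_mul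
    · exact le_trans (le_min hf hg) min_order_le_add

theorem mem_span_range_X_pow_iff [Finite σ] {f : MvPowerSeries σ R} {k : ℕ} :
    f ∈ Ideal.span (Set.range X) ^ k ↔ ↑k ≤ f.order := by
  refine ⟨le_order_of_mem_span_range_X_pow, fun hf => ?_⟩
  have := Fintype.ofFinite σ
  let _ : LinearOrder σ := LinearOrder.lift' _ (Fintype.equivFin σ).injective
  induction k generalizing f with
  | zero => simp
  | succ k ih =>
    have hf0 : constantCoeff f = 0 :=
      one_le_order_iff_constCoeff_eq_zero.1 (le_trans (by simp) hf)
    rw [← sum_X_mul_divXLeast hf0, pow_succ']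
    exact Ideal.sum_mem _ fun i _ =>
      Ideal.mul_mem_mul (Ideal.subset_span ⟨i, rfl⟩) (ih (le_order_divXLeast hf i))

end MvPowerSeries

section Delta

variable {k' : Type*} [CommRing k'] {n : ℕ}

theorem coeff_Delta (a b : Fin n →₀ ℕ) (f : MvPowerSeries (Fin n) k') :
    MvPowerSeries.coeff b (Delta a f) =
      (∏ i, ((a + b) i).choose (a i)) • MvPowerSeries.coeff (a + b) f :=
  rfl

@[simp]
theorem Delta_zero (f : MvPowerSeries (Fin n) k') : Delta 0 f = f := by
  ext b
  simp [coeff_Delta]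

theorem le_order_Delta {f : MvPowerSeries (Fin n) k'} {k : ℕ} (a : Fin n →₀ ℕ)
    (hf : ↑k ≤ f.order) : ↑(k - a.degree) ≤ (Delta a f).order := by
  refine MvPowerSeries.nat_le_order fun b hb => ?_
  have hab : ((a + b).degree : ℕ∞) < f.order :=
    lt_of_lt_of_le (by rw [map_add]; exact_mod_cast (by omega : a.degree + b.degree < k)) hf
  rw [coeff_Delta, MvPowerSeries.coeff_of_lt_order hab, smul_zero]

end Delta

open Polynomial

/-- over `R = k'[[x₁,…,x_n]]` with maximal ideal `M`, let `G ⊆ R[W]`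
be generated by elements `g_i W^{n_i}` and `G'` by all `Δ^α(g_i) W^{n_i-|α|}`
with `|α| < n_i`.  Then the singular condition (`I_k ⊆ M^k` for all `k ≥ 1`
for the graded pieces) holds for `G` iff it holds for `G'`. -/
theorem stmt9 {k' : Type*} [Field k'] {N : ℕ}
    (M : Ideal (MvPowerSeries (Fin N) k'))
    (hM : M = Ideal.span (Set.range (MvPowerSeries.X : Fin N → MvPowerSeries (Fin N) k')))
    {m : ℕ} (g : Fin m → MvPowerSeries (Fin N) k') (w : Fin m → ℕ) (hw : ∀ i, 1 ≤ w i)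
    (G G' : Subalgebra (MvPowerSeries (Fin N) k') (Polynomial (MvPowerSeries (Fin N) k')))
    (hG : G = Algebra.adjoin _ {p | ∃ i, p = C (g i) * X ^ (w i)})
    (hG' : G' = Algebra.adjoin _
      {p | ∃ (i : Fin m) (a : Fin N →₀ ℕ), (∑ j, a j) < w i ∧
        p = C (Delta a (g i)) * X ^ (w i - ∑ j, a j)}) :
    (∀ k, 1 ≤ k → ∀ c, C c * X ^ k ∈ G → c ∈ M ^ k) ↔
      (∀ k, 1 ≤ k → ∀ c, C c * X ^ k ∈ G' → c ∈ M ^ k) := by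
  subst hM
  constructor
  · intro hsing k _ c hc
    have hgen : ∀ i, ↑(w i) ≤ (g i).order := fun i =>
      MvPowerSeries.mem_span_range_X_pow_iff.1
        (hsing _ (hw i) _ (hG ▸ Algebra.subset_adjoin ⟨i, rfl⟩))
    have hrees : G' ≤ reesAlgebra (Ideal.span (Set.range MvPowerSeries.X)) := by
      refine hG' ▸ Algebra.adjoin_le ?_
      rintro _ ⟨i, a, -, rfl⟩
      rw [SetLike.mem_coe, C_mul_X_pow_eq_monomial, reesAlgebra.monomial_mem,
        MvPowerSeries.mem_span_range_X_pow_iff, ← Finsupp.degree_eq_sum]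
      exact le_order_Delta a (hgen i)
    rw [C_mul_X_pow_eq_monomial] at hc
    exact reesAlgebra.monomial_mem.1 (hrees hc)
  · have hGG' : G ≤ G' := by
      rw [hG, hG']
      refine Algebra.adjoin_mono ?_
      rintro _ ⟨i, rfl⟩
      exact ⟨i, 0, by simpa using Nat.succ_le_iff.1 (hw i), by simp⟩
    exact fun hsing k hk c hc => hsing k hk c (hGG' hc)
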